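/- (Non-conformity defect of the basis.) Let β > 0, V(q) = 1 − cos q, and g_j = ∫_𝕋 G_j dν. For every integer K ≥ 2, ‖(Π_K^q 1)'‖²_{L²(ν)} = (β²/16)·(g_{2K}² + g_{2K−1}² + g_{2K−2}² + g_{2K−3}²); in particular ‖(Π_K^q 1)'‖²_{L²(ν)} ≤ (β²/16)·‖1 − Π_{K−1}^q 1‖²_{L²(ν)}, where 1 denotes the constant function equal to one. -/

import Mathlib

open MeasureTheory Real
open scoped ContDiff

/-- The normalization constant `Zν`. -/
noncomputable def Znu (β : ℝ) (V : ℝ → ℝ) : ℝ :=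
  ∫ q in Set.Ioc (0:ℝ) (2*π), Real.exp (-(β * V q))

/-- The marginal measure in position: `ν(dq) = Zν⁻¹ e^{-βV(q)} dq` on the torus,
realized as a measure on the fundamental domain `(0, 2π]`. -/
noncomputable def nuMeas (β : ℝ) (V : ℝ → ℝ) : Measure ℝ :=
  (ENNReal.ofReal (Znu β V)⁻¹) •
    ((volume.restrict (Set.Ioc (0:ℝ) (2*π))).withDensity
      fun q => ENNReal.ofReal (Real.exp (-(β * V q))))

/-- The weighted Fourier functions: `G₀ = (Zν/2π)^{1/2} e^{βV/2}`,
`G_{2k} = (Zν/π)^{1/2} cos(kq) e^{βV/2}`, `G_{2k-1} = (Zν/π)^{1/2} sin(kq) e^{βV/2}`. -/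
noncomputable def Gfun (β : ℝ) (V : ℝ → ℝ) (j : ℕ) (q : ℝ) : ℝ :=
  if j = 0 then Real.sqrt (Znu β V / (2*π)) * Real.exp (β * V q / 2)
  else if j % 2 = 0 then
    Real.sqrt (Znu β V / π) * Real.cos ((j/2 : ℕ) * q) * Real.exp (β * V q / 2)
  else Real.sqrt (Znu β V / π) * Real.sin (((j+1)/2 : ℕ) * q) * Real.exp (β * V q / 2)

/-- The orthogonal projection `Π_K^q` of `L²(ν)` onto `span{G₀, …, G_{2K-2}}`. -/
noncomputable def projq (β : ℝ) (V : ℝ → ℝ) (K : ℕ) (φ : ℝ → ℝ) (q : ℝ) : ℝ :=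
  ∑ j ∈ Finset.range (2*K - 1),
    (∫ q', φ q' * Gfun β V j q' ∂(nuMeas β V)) * Gfun β V j q

/-- The cosine potential `V(q) = 1 - cos q`. -/
noncomputable def Vcos : ℝ → ℝ := fun q => 1 - Real.cos q

/-! ### Auxiliary material -/

lemma Vcos_cont : Continuous Vcos := by unfold Vcos; continuity

attribute [fun_prop] Vcos_cont

lemma weight_cont (β : ℝ) : Continuous fun q => Real.exp (-(β * Vcos q)) :=
  ((continuous_const.mul Vcos_cont).neg).rexp

noncomputable def hfun (β : ℝ) (q : ℝ) : ℝ := Real.exp (-(β * Vcos q)/2)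

lemma hfun_cont (β : ℝ) : Continuous (hfun β) := by
  unfold hfun; exact ((continuous_const.mul Vcos_cont).neg.div_const 2).rexp

noncomputable def gc (β : ℝ) (k : ℕ) : ℝ :=
  ∫ q in (0:ℝ)..(2*π), Real.cos (k*q) * hfun β q

noncomputable def acoef (β : ℝ) (k : ℕ) : ℝ :=
  if k = 0 then gc β 0 / (2*π) else gc β k / π

noncomputable def Psum (β : ℝ) (K : ℕ) (q : ℝ) : ℝ :=
  ∑ k ∈ Finset.range K, acoef β k * Real.cos (k*q)

noncomputable def dPsum (β : ℝ) (K : ℕ) (q : ℝ) : ℝ :=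
  ∑ k ∈ Finset.range K, acoef β k * (-((k:ℝ) * Real.sin (k*q)))

lemma Znu_pos (β : ℝ) : 0 < Znu β Vcos := by
  have h : Znu β Vcos = ∫ q in (0:ℝ)..(2*π), Real.exp (-(β * Vcos q)) := by
    rw [intervalIntegral.integral_of_le (by positivity)]; rfl
  rw [h]
  apply intervalIntegral.intervalIntegral_pos_of_pos_on
  · exact ((weight_cont β).intervalIntegrable _ _)
  · intro x _; positivity
  · positivity

/-- Conversion of `nuMeas` integrals to interval integrals. -/
lemma nu_integral (β : ℝ) (f : ℝ → ℝ) (hf : Continuous f) :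
    ∫ q, f q ∂(nuMeas β Vcos)
      = (Znu β Vcos)⁻¹ * ∫ q in (0:ℝ)..(2*π), f q * Real.exp (-(β * Vcos q)) := by
  unfold nuMeas
  rw [integral_smul_measure]
  have hd : (fun q => ENNReal.ofReal (Real.exp (-(β * Vcos q))))
      = fun q => (((fun q => (Real.exp (-(β * Vcos q))).toNNReal) q : NNReal) : ENNReal) := rfl
  have hm : Measurable fun q => (Real.exp (-(β * Vcos q))).toNNReal :=
    (continuous_real_toNNReal.comp (weight_cont β)).measurable
  rw [hd, integral_withDensity_eq_integral_smul hm]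
  rw [ENNReal.toReal_ofReal (inv_nonneg.mpr (Znu_pos β).le), smul_eq_mul]
  congr 1
  rw [intervalIntegral.integral_of_le (by positivity)]
  apply setIntegral_congr_fun measurableSet_Ioc
  intro q _
  simp only [Function.comp, NNReal.smul_def, smul_eq_mul]
  rw [Real.coe_toNNReal _ (Real.exp_nonneg _)]
  ring

/-- Weighted version: the `e^{βV/2}` part combines with the density. -/
lemma nu_integral_weighted (β : ℝ) (f : ℝ → ℝ) (hf : Continuous f) :
    ∫ q, f q * Real.exp (β * Vcos q / 2) ∂(nuMeas β Vcos)
      = (Znu β Vcos)⁻¹ * ∫ q in (0:ℝ)..(2*π), f q * hfun β q := by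
  rw [nu_integral β (fun q => f q * Real.exp (β * Vcos q / 2)) (hf.mul ((continuous_const.mul Vcos_cont).div_const 2).rexp)]
  congr 1
  apply intervalIntegral.integral_congr
  intro q _
  dsimp only
  rw [mul_assoc, ← Real.exp_add]
  unfold hfun
  ring_nf

/-! ### Trigonometric integrals -/

lemma sin_nat_two_pi (m : ℕ) : Real.sin ((m:ℝ) * (2*π)) = 0 := by
  have := Real.sin_nat_mul_two_pi_sub 0 m
  rw [sub_zero, Real.sin_zero, neg_zero] at this
  exact this

lemma int_cos_nat (m : ℕ) (hm : m ≠ 0) :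
    ∫ q in (0:ℝ)..(2*π), Real.cos (m*q) = 0 := by
  have hc : ((m:ℝ)) ≠ 0 := Nat.cast_ne_zero.mpr hm
  rw [intervalIntegral.integral_comp_mul_left Real.cos hc, integral_cos]
  simp [sin_nat_two_pi m]

lemma sin_mul_sin' (x y : ℝ) :
    Real.sin x * Real.sin y = (Real.cos (x - y) - Real.cos (x + y)) / 2 := by
  rw [Real.cos_sub, Real.cos_add]; ring

lemma cos_mul_cos' (x y : ℝ) :
    Real.cos x * Real.cos y = (Real.cos (x - y) + Real.cos (x + y)) / 2 := by
  rw [Real.cos_sub, Real.cos_add]; ring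

lemma sin_mul_cos' (x y : ℝ) :
    Real.sin x * Real.cos y = (Real.sin (x + y) + Real.sin (x - y)) / 2 := by
  rw [Real.sin_sub, Real.sin_add]; ring

lemma int_cos_mul_cos (a b : ℕ) (hab : a ≠ b) :
    ∫ q in (0:ℝ)..(2*π), Real.cos (a*q) * Real.cos (b*q) = 0 := by
  wlog hle : b ≤ a generalizing a b
  · rw [intervalIntegral.integral_congr (g := fun q => Real.cos (b*q) * Real.cos (a*q))
      (fun q _ => mul_comm _ _)]
    exact this b a hab.symm (le_of_not_ge hle)
  obtain ⟨d, rfl⟩ := Nat.exists_eq_add_of_le hle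
  have key : ∀ q : ℝ, Real.cos ((b+d : ℕ)*q) * Real.cos (b*q)
      = (Real.cos ((d:ℕ)*q) + Real.cos ((b+(b+d) : ℕ)*q)) / 2 := by
    intro q; rw [cos_mul_cos']; push_cast; ring_nf
  rw [intervalIntegral.integral_congr (fun q _ => key q)]
  have hd : d ≠ 0 := by rintro rfl; simp at hab
  have i1 : IntervalIntegrable (fun q => Real.cos ((d:ℕ)*q)) volume 0 (2*π) :=
    (Continuous.intervalIntegrable (by continuity) _ _)
  have i2 : IntervalIntegrable (fun q => Real.cos ((b+(b+d) : ℕ)*q)) volume 0 (2*π) :=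
    (Continuous.intervalIntegrable (by continuity) _ _)
  rw [intervalIntegral.integral_div, intervalIntegral.integral_add i1 i2,
    int_cos_nat d hd, int_cos_nat _ (by omega)]
  norm_num

lemma int_cos_sq (m : ℕ) (hm : m ≠ 0) :
    ∫ q in (0:ℝ)..(2*π), Real.cos (m*q) * Real.cos (m*q) = π := by
  have key : ∀ q : ℝ, Real.cos (m*q) * Real.cos (m*q)
      = (Real.cos ((0:ℕ)*q) + Real.cos ((2*m : ℕ)*q)) / 2 := by
    intro q; rw [cos_mul_cos']; push_cast; ring_nf
  rw [intervalIntegral.integral_congr (fun q _ => key q)]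
  have i1 : IntervalIntegrable (fun q => Real.cos ((0:ℕ)*q)) volume 0 (2*π) :=
    (Continuous.intervalIntegrable (by continuity) _ _)
  have i2 : IntervalIntegrable (fun q => Real.cos ((2*m : ℕ)*q)) volume 0 (2*π) :=
    (Continuous.intervalIntegrable (by continuity) _ _)
  have h0 : ∫ q in (0:ℝ)..(2*π), Real.cos ((0:ℕ)*q) = 2*π := by norm_num
  rw [intervalIntegral.integral_div, intervalIntegral.integral_add i1 i2,
    int_cos_nat (2*m) (by omega), h0]
  ring

lemma int_sin_mul_sin (a b : ℕ) (hab : a ≠ b) :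
    ∫ q in (0:ℝ)..(2*π), Real.sin (a*q) * Real.sin (b*q) = 0 := by
  wlog hle : b ≤ a generalizing a b
  · rw [intervalIntegral.integral_congr (g := fun q => Real.sin (b*q) * Real.sin (a*q))
      (fun q _ => mul_comm _ _)]
    exact this b a hab.symm (le_of_not_ge hle)
  obtain ⟨d, rfl⟩ := Nat.exists_eq_add_of_le hle
  have key : ∀ q : ℝ, Real.sin ((b+d : ℕ)*q) * Real.sin (b*q)
      = (Real.cos ((d:ℕ)*q) - Real.cos ((b+(b+d) : ℕ)*q)) / 2 := by
    intro q; rw [sin_mul_sin']; push_cast; ring_nf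
  rw [intervalIntegral.integral_congr (fun q _ => key q)]
  have hd : d ≠ 0 := by rintro rfl; simp at hab
  have i1 : IntervalIntegrable (fun q => Real.cos ((d:ℕ)*q)) volume 0 (2*π) :=
    (Continuous.intervalIntegrable (by continuity) _ _)
  have i2 : IntervalIntegrable (fun q => Real.cos ((b+(b+d) : ℕ)*q)) volume 0 (2*π) :=
    (Continuous.intervalIntegrable (by continuity) _ _)
  rw [intervalIntegral.integral_div, intervalIntegral.integral_sub i1 i2,
    int_cos_nat d hd, int_cos_nat _ (by omega)]
  norm_num

lemma int_sin_sq (m : ℕ) (hm : m ≠ 0) :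
    ∫ q in (0:ℝ)..(2*π), Real.sin (m*q) * Real.sin (m*q) = π := by
  have key : ∀ q : ℝ, Real.sin (m*q) * Real.sin (m*q)
      = (Real.cos ((0:ℕ)*q) - Real.cos ((2*m : ℕ)*q)) / 2 := by
    intro q; rw [sin_mul_sin']; push_cast; ring_nf
  rw [intervalIntegral.integral_congr (fun q _ => key q)]
  have i1 : IntervalIntegrable (fun q => Real.cos ((0:ℕ)*q)) volume 0 (2*π) :=
    (Continuous.intervalIntegrable (by continuity) _ _)
  have i2 : IntervalIntegrable (fun q => Real.cos ((2*m : ℕ)*q)) volume 0 (2*π) :=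
    (Continuous.intervalIntegrable (by continuity) _ _)
  have h0 : ∫ q in (0:ℝ)..(2*π), Real.cos ((0:ℕ)*q) = 2*π := by norm_num
  rw [intervalIntegral.integral_div, intervalIntegral.integral_sub i1 i2,
    int_cos_nat (2*m) (by omega), h0]
  ring

/-! ### Fourier coefficients of `hfun` -/

lemma hfun_sub (β x : ℝ) : hfun β (2*π - x) = hfun β x := by
  unfold hfun Vcos; rw [Real.cos_two_pi_sub]

lemma gs_zero (β : ℝ) (k : ℕ) :
    ∫ q in (0:ℝ)..(2*π), Real.sin (k*q) * hfun β q = 0 := by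
  have hsub : (∫ q in (0:ℝ)..(2*π), Real.sin (k*q) * hfun β q)
      = ∫ q in (0:ℝ)..(2*π), Real.sin (k*(2*π - q)) * hfun β (2*π - q) := by
    rw [intervalIntegral.integral_comp_sub_left
      (fun x => Real.sin (k*x) * hfun β x) (2*π)]
    norm_num
  have hpt : ∀ q : ℝ, Real.sin (k*(2*π - q)) * hfun β (2*π - q)
      = -(Real.sin (k*q) * hfun β q) := by
    intro q
    rw [hfun_sub]
    have : (k:ℝ)*(2*π - q) = k*(2*π) - k*q := by ring
    rw [this, Real.sin_nat_mul_two_pi_sub]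
    ring
  rw [intervalIntegral.integral_congr (fun q _ => hpt q),
    intervalIntegral.integral_neg] at hsub
  linarith

lemma hasDerivAt_hfun (β q : ℝ) :
    HasDerivAt (hfun β) (-(β * Real.sin q)/2 * hfun β q) q := by
  have hV : HasDerivAt Vcos (Real.sin q) q := by
    have := (Real.hasDerivAt_cos q).const_sub 1
    rw [neg_neg] at this
    exact this
  have h1 : HasDerivAt (fun x => -(β * Vcos x)/2) (-(β * Real.sin q)/2) q :=
    ((hV.const_mul β).neg).div_const 2
  have := h1.exp
  show HasDerivAt (fun x => Real.exp (-(β * Vcos x)/2)) (-(β * Real.sin q)/2 * hfun β q) q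
  simpa [hfun, mul_comm] using this

lemma hasDerivAt_sin_smul (a : ℝ) (q : ℝ) :
    HasDerivAt (fun x : ℝ => Real.sin (a * x)) (a * Real.cos (a * q)) q := by
  have := ((hasDerivAt_id q).const_mul a).sin
  simpa [mul_comm] using this

lemma hasDerivAt_cos_smul (a : ℝ) (q : ℝ) :
    HasDerivAt (fun x : ℝ => Real.cos (a * x)) (-(a * Real.sin (a * q))) q := by
  have := ((hasDerivAt_id q).const_mul a).cos
  simpa [mul_comm] using this

lemma ii_cos_hfun (β : ℝ) (k : ℕ) :
    IntervalIntegrable (fun q => Real.cos (k*q) * hfun β q) volume 0 (2*π) :=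
  (Continuous.intervalIntegrable
    ((Real.continuous_cos.comp (continuous_const.mul continuous_id)).mul (hfun_cont β)) _ _)

lemma gc_rec (β : ℝ) (m : ℕ) :
    ((m:ℝ)+1) * gc β (m+1) = β/4 * (gc β m - gc β (m+2)) := by
  set h := hfun β with hh
  set F' : ℝ → ℝ := fun q =>
    ((m:ℝ)+1) * (Real.cos ((m+1:ℕ) * q) * h q)
      - β/4 * (Real.cos ((m:ℕ)*q) * h q) + β/4 * (Real.cos ((m+2:ℕ)*q) * h q) with hF'
  have hFderiv : ∀ q : ℝ, HasDerivAt (fun x => Real.sin (((m+1:ℕ):ℝ) * x) * h x) (F' q) q := by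
    intro q
    have := (hasDerivAt_sin_smul ((m+1:ℕ):ℝ) q).mul (hasDerivAt_hfun β q)
    have heq : ((m+1:ℕ):ℝ) * Real.cos (((m+1:ℕ):ℝ) * q) * h q
        + Real.sin (((m+1:ℕ):ℝ) * q) * (-(β * Real.sin q)/2 * h q) = F' q := by
      have hss : Real.sin (((m+1:ℕ):ℝ) * q) * Real.sin q
          = (Real.cos ((m:ℕ)*q) - Real.cos ((m+2:ℕ)*q))/2 := by
        rw [sin_mul_sin' (((m+1:ℕ):ℝ) * q) q]
        push_cast
        ring_nf
      rw [hF']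
      push_cast at hss ⊢
      linear_combination (-(β) * h q / 2) * hss
    exact heq ▸ this
  have hint : ∫ q in (0:ℝ)..(2*π), F' q
      = Real.sin (((m+1:ℕ):ℝ) * (2*π)) * h (2*π) - Real.sin (((m+1:ℕ):ℝ) * 0) * h 0 := by
    apply intervalIntegral.integral_eq_sub_of_hasDerivAt (fun x _ => hFderiv x)
    apply Continuous.intervalIntegrable
    rw [hF']
    apply Continuous.add
    apply Continuous.sub
    · exact continuous_const.mul ((Real.continuous_cos.comp (continuous_const.mul continuous_id)).mul (hfun_cont β))
    · exact continuous_const.mul ((Real.continuous_cos.comp (continuous_const.mul continuous_id)).mul (hfun_cont β))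
    · exact continuous_const.mul ((Real.continuous_cos.comp (continuous_const.mul continuous_id)).mul (hfun_cont β))
  rw [sin_nat_two_pi (m+1), mul_zero, Real.sin_zero] at hint
  have hsplit : ∫ q in (0:ℝ)..(2*π), F' q
      = ((m:ℝ)+1) * gc β (m+1) - β/4 * gc β m + β/4 * gc β (m+2) := by
    rw [hF']
    rw [intervalIntegral.integral_add (((ii_cos_hfun β (m+1)).const_mul _).sub
        ((ii_cos_hfun β m).const_mul _)) ((ii_cos_hfun β (m+2)).const_mul _),
      intervalIntegral.integral_sub ((ii_cos_hfun β (m+1)).const_mul _)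
        ((ii_cos_hfun β m).const_mul _),
      intervalIntegral.integral_const_mul, intervalIntegral.integral_const_mul,
      intervalIntegral.integral_const_mul]
    rfl
  rw [hsplit] at hint
  simp at hint
  linarith

/-! ### Representation of the projection -/

lemma coef_odd (β : ℝ) (j : ℕ) (hj : j % 2 = 1) :
    ∫ q', (fun _ => (1:ℝ)) q' * Gfun β Vcos j q' ∂(nuMeas β Vcos) = 0 := by
  have hj0 : j ≠ 0 := by omega
  have hG : ∀ q, Gfun β Vcos j q
      = (Real.sqrt (Znu β Vcos / π) * Real.sin (((j+1)/2 : ℕ) * q))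
          * Real.exp (β * Vcos q / 2) := by
    intro q; unfold Gfun; rw [if_neg hj0, if_neg (by omega)]
  simp only [one_mul, hG]
  rw [nu_integral_weighted β
    (fun q => Real.sqrt (Znu β Vcos / π) * Real.sin (((j+1)/2 : ℕ) * q)) (by fun_prop)]
  have : (∫ q in (0:ℝ)..(2*π),
      Real.sqrt (Znu β Vcos / π) * Real.sin (((j+1)/2 : ℕ) * q) * hfun β q)
      = Real.sqrt (Znu β Vcos / π)
        * ∫ q in (0:ℝ)..(2*π), Real.sin (((j+1)/2 : ℕ) * q) * hfun β q := by
    rw [← intervalIntegral.integral_const_mul]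
    apply intervalIntegral.integral_congr
    intro q _; ring
  rw [this, gs_zero]
  ring

lemma term_even (β : ℝ) (k : ℕ) (q : ℝ) :
    (∫ q', (fun _ => (1:ℝ)) q' * Gfun β Vcos (2*k) q' ∂(nuMeas β Vcos)) * Gfun β Vcos (2*k) q
      = acoef β k * Real.cos (k*q) * Real.exp (β * Vcos q / 2) := by
  have hZ := Znu_pos β
  have hπ := Real.pi_pos
  rcases Nat.eq_zero_or_pos k with rfl | hk
  · have hG : ∀ x, Gfun β Vcos (2*0) x
        = Real.sqrt (Znu β Vcos/(2*π)) * Real.exp (β * Vcos x/2) := by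
      intro x; unfold Gfun; rw [if_pos (by norm_num)]
    simp only [one_mul, hG]
    rw [nu_integral_weighted β (fun _ => Real.sqrt (Znu β Vcos/(2*π))) continuous_const]
    have hgc : (∫ x in (0:ℝ)..(2*π), Real.sqrt (Znu β Vcos/(2*π)) * hfun β x)
        = Real.sqrt (Znu β Vcos/(2*π)) * gc β 0 := by
      unfold gc
      rw [← intervalIntegral.integral_const_mul]
      apply intervalIntegral.integral_congr
      intro x _
      simp
    rw [hgc]
    have hsq : Real.sqrt (Znu β Vcos/(2*π)) * Real.sqrt (Znu β Vcos/(2*π))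
        = Znu β Vcos/(2*π) := Real.mul_self_sqrt (by positivity)
    have hacoef : acoef β 0 = gc β 0 / (2*π) := by unfold acoef; rw [if_pos rfl]
    have hcos : Real.cos ((0:ℕ)*q) = 1 := by norm_num
    rw [hacoef, hcos]
    rw [show (Znu β Vcos)⁻¹ * (Real.sqrt (Znu β Vcos/(2*π)) * gc β 0)
        * (Real.sqrt (Znu β Vcos/(2*π)) * Real.exp (β * Vcos q / 2))
        = (Real.sqrt (Znu β Vcos/(2*π)) * Real.sqrt (Znu β Vcos/(2*π)))
          * (Znu β Vcos)⁻¹ * gc β 0 * Real.exp (β * Vcos q / 2) from by ring, hsq]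
    field_simp
  · have h2k : (2*k) ≠ 0 := by omega
    have hdiv : (2*k)/2 = k := by omega
    have hG : ∀ x, Gfun β Vcos (2*k) x
        = Real.sqrt (Znu β Vcos/π) * Real.cos ((k:ℝ)*x) * Real.exp (β * Vcos x/2) := by
      intro x; unfold Gfun
      rw [if_neg h2k, if_pos (by omega), hdiv]
    simp only [one_mul, hG]
    rw [nu_integral_weighted β
      (fun x => Real.sqrt (Znu β Vcos/π) * Real.cos ((k:ℝ)*x)) (by fun_prop)]
    have hgc : (∫ x in (0:ℝ)..(2*π), Real.sqrt (Znu β Vcos/π) * Real.cos ((k:ℝ)*x) * hfun β x)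
        = Real.sqrt (Znu β Vcos/π) * gc β k := by
      unfold gc
      rw [← intervalIntegral.integral_const_mul]
      apply intervalIntegral.integral_congr
      intro x _
      ring
    rw [hgc]
    have hsq : Real.sqrt (Znu β Vcos/π) * Real.sqrt (Znu β Vcos/π)
        = Znu β Vcos/π := Real.mul_self_sqrt (by positivity)
    have hacoef : acoef β k = gc β k / π := by unfold acoef; rw [if_neg (by omega)]
    rw [hacoef]
    rw [show (Znu β Vcos)⁻¹ * (Real.sqrt (Znu β Vcos/π) * gc β k)
        * (Real.sqrt (Znu β Vcos/π) * Real.cos ((k:ℝ)*q) * Real.exp (β * Vcos q / 2))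
        = (Real.sqrt (Znu β Vcos/π) * Real.sqrt (Znu β Vcos/π))
          * (Znu β Vcos)⁻¹ * gc β k * Real.cos ((k:ℝ)*q) * Real.exp (β * Vcos q / 2) from by
          ring, hsq]
    field_simp

lemma sum_even_eq (F : ℕ → ℝ) (hF : ∀ j, j % 2 = 1 → F j = 0) (n : ℕ) :
    ∑ j ∈ Finset.range (2*n+1), F j = ∑ k ∈ Finset.range (n+1), F (2*k) := by
  induction n with
  | zero => simp
  | succ n ih =>
      have h1 : 2*(n+1)+1 = (2*n+1)+1+1 := by ring
      rw [h1, Finset.sum_range_succ, Finset.sum_range_succ, ih,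
        Finset.sum_range_succ (f := fun k => F (2*k)) (n := n+1),
        hF (2*n+1) (by omega)]
      have : 2*n+1+1 = 2*(n+1) := by ring
      rw [this, add_zero]

lemma proj_repr (β : ℝ) (K : ℕ) (hK : 1 ≤ K) (q : ℝ) :
    projq β Vcos K (fun _ => 1) q = Real.exp (β * Vcos q / 2) * Psum β K q := by
  unfold projq
  have h2K : 2*K - 1 = 2*(K-1)+1 := by omega
  rw [h2K, sum_even_eq _ (fun j hj => by rw [coef_odd β j hj, zero_mul]) (K-1)]
  have hK1 : K - 1 + 1 = K := by omega
  rw [hK1]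
  unfold Psum
  rw [Finset.mul_sum]
  apply Finset.sum_congr rfl
  intro k _
  rw [term_even]
  ring

/-! ### Derivative of the projection -/

lemma Psum_cont (β : ℝ) (K : ℕ) : Continuous (fun q => Psum β K q) := by
  unfold Psum
  exact continuous_finset_sum _ (fun k _ => continuous_const.mul (by fun_prop))

lemma Psum_hasDeriv (β : ℝ) (K : ℕ) (q : ℝ) :
    HasDerivAt (fun x => Psum β K x) (dPsum β K q) q := by
  unfold Psum dPsum
  apply HasDerivAt.fun_sum
  intro k _
  exact (hasDerivAt_cos_smul (k:ℝ) q).const_mul (acoef β k)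

lemma Efun_hasDeriv (β q : ℝ) :
    HasDerivAt (fun x => Real.exp (β * Vcos x / 2))
      (β/2 * Real.sin q * Real.exp (β * Vcos q / 2)) q := by
  have hV : HasDerivAt Vcos (Real.sin q) q := by
    have := (Real.hasDerivAt_cos q).const_sub 1
    rw [neg_neg] at this
    exact this
  have h1 : HasDerivAt (fun x => β * Vcos x / 2) (β * Real.sin q / 2) q :=
    (hV.const_mul β).div_const 2
  have := h1.exp
  convert this using 1
  ring

lemma deriv_proj (β : ℝ) (K : ℕ) (hK : 1 ≤ K) (q : ℝ) :
    deriv (projq β Vcos K (fun _ => 1)) q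
      = Real.exp (β * Vcos q / 2) * (β/2 * Real.sin q * Psum β K q + dPsum β K q) := by
  have heq : projq β Vcos K (fun _ => 1)
      = fun x => Real.exp (β * Vcos x / 2) * Psum β K x := funext (proj_repr β K hK)
  rw [heq]
  rw [((Efun_hasDeriv β q).fun_mul (Psum_hasDeriv β K q)).deriv]
  ring

lemma LP_eq (β : ℝ) (m : ℕ) (q : ℝ) :
    β/2 * Real.sin q * Psum β (m+2) q + dPsum β (m+2) q
      = β/(4*π) * gc β (m+2) * Real.sin (((m:ℝ)+1)*q)
        + β/(4*π) * gc β (m+1) * Real.sin (((m:ℝ)+2)*q) := by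
  induction m with
  | zero =>
    unfold Psum dPsum
    rw [Finset.sum_range_succ, Finset.sum_range_succ, Finset.sum_range_zero,
      Finset.sum_range_succ, Finset.sum_range_succ, Finset.sum_range_zero]
    have ha0 : acoef β 0 = gc β 0 / (2*π) := by unfold acoef; rw [if_pos rfl]
    have ha1 : acoef β 1 = gc β 1 / π := by unfold acoef; rw [if_neg one_ne_zero]
    have hrec := gc_rec β 0
    have h2 := Real.sin_two_mul q
    rw [ha0, ha1]
    simp only [Nat.cast_zero, Nat.cast_one, zero_mul, Real.cos_zero, Real.sin_zero,
      one_mul, mul_zero, neg_zero, mul_one, add_zero, zero_add, mul_neg]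
    norm_num at hrec
    linear_combination (-(Real.sin q)/π) * hrec + (-(β * gc β 1)/(4*π)) * h2
  | succ n ih =>
    unfold Psum dPsum at ih ⊢
    rw [Finset.sum_range_succ (n := n+2), Finset.sum_range_succ (n := n+2)]
    have ha : acoef β (n+2) = gc β (n+2) / π := by unfold acoef; rw [if_neg (by omega)]
    have hrec := gc_rec β (n+1)
    have hsc : Real.sin q * Real.cos (((n:ℝ)+2)*q)
        = (Real.sin (((n:ℝ)+3)*q) - Real.sin (((n:ℝ)+1)*q))/2 := by
      rw [sin_mul_cos' q (((n:ℝ)+2)*q),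
        show q + ((n:ℝ)+2)*q = ((n:ℝ)+3)*q from by ring,
        show q - ((n:ℝ)+2)*q = -(((n:ℝ)+1)*q) from by ring, Real.sin_neg]
      ring
    rw [ha]
    push_cast at hrec ih ⊢
    rw [show ((n:ℝ)+1+1) = (n:ℝ)+2 from by ring, show ((n:ℝ)+1+2) = (n:ℝ)+3 from by ring,
      show (n+1+1 : ℕ) = n+2 from by omega, show (n+1+2 : ℕ) = n+3 from by omega]
    rw [show ((n:ℝ)+1+1) = (n:ℝ)+2 from by ring,
      show (n+1+1 : ℕ) = n+2 from by omega, show (n+1+2 : ℕ) = n+3 from by omega] at hrec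
    linear_combination ih + (β * gc β (n+2)/(2*π)) * hsc
      + (-(Real.sin (((n:ℝ)+2)*q))/π) * hrec

/-! ### Quadrature of sine/cosine combinations -/

lemma int_sin_comb_sq (A B : ℝ) (a : ℕ) (ha : a ≠ 0) :
    ∫ q in (0:ℝ)..(2*π), (A * Real.sin ((a:ℕ)*q) + B * Real.sin ((a+1:ℕ)*q))^2
      = π * (A^2 + B^2) := by
  have key : ∀ q:ℝ, (A * Real.sin ((a:ℕ)*q) + B * Real.sin ((a+1:ℕ)*q))^2
      = A^2*(Real.sin ((a:ℕ)*q)*Real.sin ((a:ℕ)*q))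
        + (2*A*B)*(Real.sin ((a:ℕ)*q)*Real.sin ((a+1:ℕ)*q))
        + B^2*(Real.sin ((a+1:ℕ)*q)*Real.sin ((a+1:ℕ)*q)) := by
    intro q; ring
  rw [intervalIntegral.integral_congr (fun q _ => key q)]
  have i1 : IntervalIntegrable
      (fun q => A^2*(Real.sin ((a:ℕ)*q)*Real.sin ((a:ℕ)*q))) volume 0 (2*π) :=
    Continuous.intervalIntegrable (by fun_prop) _ _
  have i2 : IntervalIntegrable
      (fun q => (2*A*B)*(Real.sin ((a:ℕ)*q)*Real.sin ((a+1:ℕ)*q))) volume 0 (2*π) :=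
    Continuous.intervalIntegrable (by fun_prop) _ _
  have i3 : IntervalIntegrable
      (fun q => B^2*(Real.sin ((a+1:ℕ)*q)*Real.sin ((a+1:ℕ)*q))) volume 0 (2*π) :=
    Continuous.intervalIntegrable (by fun_prop) _ _
  rw [intervalIntegral.integral_add (i1.add i2) i3, intervalIntegral.integral_add i1 i2,
    intervalIntegral.integral_const_mul, intervalIntegral.integral_const_mul,
    intervalIntegral.integral_const_mul, int_sin_sq a ha, int_sin_sq (a+1) (by omega),
    int_sin_mul_sin a (a+1) (by omega)]
  ring

lemma int_cos_comb_sq (A B : ℝ) (a : ℕ) (ha : a ≠ 0) :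
    ∫ q in (0:ℝ)..(2*π), (A * Real.cos ((a:ℕ)*q) + B * Real.cos ((a+1:ℕ)*q))^2
      = π * (A^2 + B^2) := by
  have key : ∀ q:ℝ, (A * Real.cos ((a:ℕ)*q) + B * Real.cos ((a+1:ℕ)*q))^2
      = A^2*(Real.cos ((a:ℕ)*q)*Real.cos ((a:ℕ)*q))
        + (2*A*B)*(Real.cos ((a:ℕ)*q)*Real.cos ((a+1:ℕ)*q))
        + B^2*(Real.cos ((a+1:ℕ)*q)*Real.cos ((a+1:ℕ)*q)) := by
    intro q; ring
  rw [intervalIntegral.integral_congr (fun q _ => key q)]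
  have i1 : IntervalIntegrable
      (fun q => A^2*(Real.cos ((a:ℕ)*q)*Real.cos ((a:ℕ)*q))) volume 0 (2*π) :=
    Continuous.intervalIntegrable (by fun_prop) _ _
  have i2 : IntervalIntegrable
      (fun q => (2*A*B)*(Real.cos ((a:ℕ)*q)*Real.cos ((a+1:ℕ)*q))) volume 0 (2*π) :=
    Continuous.intervalIntegrable (by fun_prop) _ _
  have i3 : IntervalIntegrable
      (fun q => B^2*(Real.cos ((a+1:ℕ)*q)*Real.cos ((a+1:ℕ)*q))) volume 0 (2*π) :=
    Continuous.intervalIntegrable (by fun_prop) _ _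
  rw [intervalIntegral.integral_add (i1.add i2) i3, intervalIntegral.integral_add i1 i2,
    intervalIntegral.integral_const_mul, intervalIntegral.integral_const_mul,
    intervalIntegral.integral_const_mul, int_cos_sq a ha, int_cos_sq (a+1) (by omega),
    int_cos_mul_cos a (a+1) (by omega)]
  ring

/-! ### The left-hand side -/

lemma lhs_eq (β : ℝ) (m : ℕ) :
    (∫ q, (deriv (projq β Vcos (m+2) (fun _ => 1)) q)^2 ∂(nuMeas β Vcos))
      = β^2/16 * (((gc β (m+2))^2 + (gc β (m+1))^2) / (π * Znu β Vcos)) := by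
  have hπ := Real.pi_pos
  have hZ := Znu_pos β
  have hD : deriv (projq β Vcos (m+2) (fun _ => 1))
      = fun q => Real.exp (β * Vcos q / 2)
        * (β/(4*π) * gc β (m+2) * Real.sin ((m+1:ℕ)*q)
          + β/(4*π) * gc β (m+1) * Real.sin ((m+2:ℕ)*q)) := by
    funext q
    rw [deriv_proj β (m+2) (by omega) q, LP_eq β m q]
    push_cast
    ring
  simp only [hD]
  rw [nu_integral β _ (by fun_prop)]
  have hpt : ∀ q : ℝ, (Real.exp (β * Vcos q / 2)
        * (β/(4*π) * gc β (m+2) * Real.sin ((m+1:ℕ)*q)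
          + β/(4*π) * gc β (m+1) * Real.sin ((m+2:ℕ)*q)))^2 * Real.exp (-(β * Vcos q))
      = (β/(4*π) * gc β (m+2) * Real.sin ((m+1:ℕ)*q)
          + β/(4*π) * gc β (m+1) * Real.sin ((m+2:ℕ)*q))^2 := by
    intro q
    have h1 : Real.exp (β * Vcos q / 2) * Real.exp (β * Vcos q / 2)
        * Real.exp (-(β * Vcos q)) = 1 := by
      rw [← Real.exp_add, ← Real.exp_add,
        show β * Vcos q / 2 + β * Vcos q / 2 + -(β * Vcos q) = 0 from by ring,
        Real.exp_zero]
    nlinarith [h1]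
  rw [intervalIntegral.integral_congr (fun q _ => hpt q)]
  have := int_sin_comb_sq (β/(4*π) * gc β (m+2)) (β/(4*π) * gc β (m+1)) (m+1) (by omega)
  rw [show (m+1)+1 = m+2 from rfl] at this
  rw [this]
  field_simp
  ring

/-! ### The coefficients on the right-hand side -/

lemma coef_even' (β : ℝ) (k : ℕ) (hk : k ≠ 0) :
    ∫ q, Gfun β Vcos (2*k) q ∂(nuMeas β Vcos)
      = (Znu β Vcos)⁻¹ * (Real.sqrt (Znu β Vcos/π) * gc β k) := by
  have hG : ∀ x, Gfun β Vcos (2*k) x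
      = Real.sqrt (Znu β Vcos/π) * Real.cos ((k:ℝ)*x) * Real.exp (β * Vcos x/2) := by
    intro x; unfold Gfun
    rw [if_neg (by omega), if_pos (by omega), show (2*k)/2 = k from by omega]
  simp only [hG]
  rw [nu_integral_weighted β
    (fun x => Real.sqrt (Znu β Vcos/π) * Real.cos ((k:ℝ)*x)) (by fun_prop)]
  congr 1
  unfold gc
  rw [← intervalIntegral.integral_const_mul]
  apply intervalIntegral.integral_congr
  intro x _
  ring

lemma coef_odd' (β : ℝ) (j : ℕ) (hj : j % 2 = 1) :
    ∫ q, Gfun β Vcos j q ∂(nuMeas β Vcos) = 0 := by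
  have := coef_odd β j hj
  simpa using this

/-! ### The Bessel-type inequality for the second part -/

lemma bessel (β : ℝ) (m : ℕ) :
    ((gc β (m+2))^2 + (gc β (m+1))^2) / (π * Znu β Vcos)
      ≤ ∫ q, (1 - projq β Vcos (m+1) (fun _ => 1) q)^2 ∂(nuMeas β Vcos) := by
  have hπ := Real.pi_pos
  have hZ := Znu_pos β
  have heq : projq β Vcos (m+1) (fun _ => 1)
      = fun x => Real.exp (β * Vcos x / 2) * Psum β (m+1) x :=
    funext (proj_repr β (m+1) (by omega))
  simp only [heq]
  rw [nu_integral β (fun q => (1 - Real.exp (β * Vcos q / 2) * Psum β (m+1) q)^2) (((continuous_const.sub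
    (((continuous_const.mul Vcos_cont).div_const 2).rexp.mul (Psum_cont β (m+1)))).pow 2))]
  set r : ℝ → ℝ := fun q => hfun β q - Psum β (m+1) q with hr
  have hpt : ∀ q : ℝ, (1 - Real.exp (β * Vcos q / 2) * Psum β (m+1) q)^2
        * Real.exp (-(β * Vcos q)) = (r q)^2 := by
    intro q
    have h1 : Real.exp (β * Vcos q / 2) * hfun β q = 1 := by
      unfold hfun
      rw [← Real.exp_add, show β * Vcos q / 2 + -(β * Vcos q)/2 = 0 from by ring,
        Real.exp_zero]
    have h2 : Real.exp (-(β * Vcos q)) = hfun β q * hfun β q := by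
      unfold hfun
      rw [← Real.exp_add]
      congr 1
      ring
    rw [h2]
    show _ = (hfun β q - Psum β (m+1) q)^2
    linear_combination ((-2) * Psum β (m+1) q * hfun β q
      + (Psum β (m+1) q)^2 * (Real.exp (β * Vcos q / 2) * hfun β q + 1)) * h1
  rw [intervalIntegral.integral_congr (fun q _ => hpt q)]
  -- now Bessel on the torus
  set u : ℝ → ℝ := fun q =>
    gc β (m+1)/π * Real.cos ((m+1:ℕ)*q) + gc β (m+2)/π * Real.cos ((m+2:ℕ)*q) with hu
  set X : ℝ := ((gc β (m+1))^2 + (gc β (m+2))^2) / π with hX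
  have hrcont : Continuous r := (hfun_cont β).sub (Psum_cont β (m+1))
  have hucont : Continuous u := by rw [hu]; fun_prop
  have ir2 : IntervalIntegrable (fun q => (r q)^2) volume 0 (2*π) :=
    Continuous.intervalIntegrable (hrcont.pow 2) _ _
  have iru : IntervalIntegrable (fun q => 2*(r q * u q)) volume 0 (2*π) :=
    Continuous.intervalIntegrable (continuous_const.mul (hrcont.mul hucont)) _ _
  have iu2 : IntervalIntegrable (fun q => (u q)^2) volume 0 (2*π) :=
    Continuous.intervalIntegrable (hucont.pow 2) _ _
  have hexp : (∫ q in (0:ℝ)..(2*π), (r q - u q)^2)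
      = (∫ q in (0:ℝ)..(2*π), (r q)^2) - (∫ q in (0:ℝ)..(2*π), 2*(r q * u q))
        + ∫ q in (0:ℝ)..(2*π), (u q)^2 := by
    have hc : ∀ q ∈ Set.uIcc (0:ℝ) (2*π), (r q - u q)^2
        = ((r q)^2 - 2*(r q * u q)) + (u q)^2 := fun q _ => by ring
    rw [intervalIntegral.integral_congr hc,
      intervalIntegral.integral_add (ir2.sub iru) iu2,
      intervalIntegral.integral_sub ir2 iru]
  have hnn : 0 ≤ ∫ q in (0:ℝ)..(2*π), (r q - u q)^2 :=
    intervalIntegral.integral_nonneg (by positivity) (fun q _ => sq_nonneg _)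
  have hru : (∫ q in (0:ℝ)..(2*π), r q * u q) = X := by
    have ihu : IntervalIntegrable (fun q => hfun β q * u q) volume 0 (2*π) :=
      Continuous.intervalIntegrable ((hfun_cont β).mul hucont) _ _
    have ipu : IntervalIntegrable (fun q => Psum β (m+1) q * u q) volume 0 (2*π) :=
      Continuous.intervalIntegrable ((Psum_cont β (m+1)).mul hucont) _ _
    have hsplit : (∫ q in (0:ℝ)..(2*π), r q * u q)
        = (∫ q in (0:ℝ)..(2*π), hfun β q * u q)
          - ∫ q in (0:ℝ)..(2*π), Psum β (m+1) q * u q := by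
      rw [← intervalIntegral.integral_sub ihu ipu]
      apply intervalIntegral.integral_congr
      intro q _
      simp only [hr]
      ring
    have hh : (∫ q in (0:ℝ)..(2*π), hfun β q * u q) = X := by
      have hc : ∀ q ∈ Set.uIcc (0:ℝ) (2*π), hfun β q * u q
          = gc β (m+1)/π * (Real.cos ((m+1:ℕ)*q) * hfun β q)
            + gc β (m+2)/π * (Real.cos ((m+2:ℕ)*q) * hfun β q) := by
        intro q _
        simp only [hu]
        ring
      rw [intervalIntegral.integral_congr hc,
        intervalIntegral.integral_add ((ii_cos_hfun β (m+1)).const_mul _)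
          ((ii_cos_hfun β (m+2)).const_mul _),
        intervalIntegral.integral_const_mul, intervalIntegral.integral_const_mul]
      show gc β (m+1)/π * gc β (m+1) + gc β (m+2)/π * gc β (m+2) = X
      rw [hX]
      ring
    have hp : (∫ q in (0:ℝ)..(2*π), Psum β (m+1) q * u q) = 0 := by
      have hc : ∀ q ∈ Set.uIcc (0:ℝ) (2*π), Psum β (m+1) q * u q
          = ∑ k ∈ Finset.range (m+1), acoef β k *
              (gc β (m+1)/π * (Real.cos ((k:ℕ)*q) * Real.cos ((m+1:ℕ)*q))
               + gc β (m+2)/π * (Real.cos ((k:ℕ)*q) * Real.cos ((m+2:ℕ)*q))) := by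
        intro q _
        simp only [hu]
        unfold Psum
        rw [Finset.sum_mul]
        apply Finset.sum_congr rfl
        intro k _
        ring
      rw [intervalIntegral.integral_congr hc,
        intervalIntegral.integral_finset_sum
          (fun k _ => Continuous.intervalIntegrable (by fun_prop) _ _)]
      apply Finset.sum_eq_zero
      intro k hk
      have hk' : k < m+1 := Finset.mem_range.mp hk
      rw [intervalIntegral.integral_const_mul,
        intervalIntegral.integral_add
          (Continuous.intervalIntegrable (by fun_prop) _ _)
          (Continuous.intervalIntegrable (by fun_prop) _ _),
        intervalIntegral.integral_const_mul, intervalIntegral.integral_const_mul,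
        int_cos_mul_cos k (m+1) (by omega), int_cos_mul_cos k (m+2) (by omega)]
      ring
    rw [hsplit, hh, hp]
    ring
  have huu : (∫ q in (0:ℝ)..(2*π), (u q)^2) = X := by
    have := int_cos_comb_sq (gc β (m+1)/π) (gc β (m+2)/π) (m+1) (by omega)
    rw [show (m+1)+1 = m+2 from rfl] at this
    rw [hu, hX]
    rw [this]
    field_simp
  have h2ru : (∫ q in (0:ℝ)..(2*π), 2*(r q * u q)) = 2*X := by
    rw [intervalIntegral.integral_const_mul, hru]
  have hfinal : X ≤ ∫ q in (0:ℝ)..(2*π), (r q)^2 := by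
    rw [hexp, h2ru, huu] at hnn
    linarith
  calc ((gc β (m+2))^2 + (gc β (m+1))^2) / (π * Znu β Vcos)
      = (Znu β Vcos)⁻¹ * X := by rw [hX]; field_simp; ring
    _ ≤ (Znu β Vcos)⁻¹ * ∫ q in (0:ℝ)..(2*π), (r q)^2 := by
        apply mul_le_mul_of_nonneg_left hfinal (inv_nonneg.mpr hZ.le)


/-- Non-conformity defect of the basis: for `V(q) = 1 - cos q` and `K ≥ 2`, with
`g_j = ∫ G_j dν`, one has
`‖(Π_K^q 1)'‖²_{L²(ν)} = (β²/16)(g_{2K}² + g_{2K-1}² + g_{2K-2}² + g_{2K-3}²)`, and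
in particular `‖(Π_K^q 1)'‖²_{L²(ν)} ≤ (β²/16)‖1 - Π_{K-1}^q 1‖²_{L²(ν)}`. -/
theorem nonconformity_defect (β : ℝ) (hβ : 0 < β) (K : ℕ) (hK : 2 ≤ K) :
    (∫ q, (deriv (projq β Vcos K (fun _ => 1)) q)^2 ∂(nuMeas β Vcos))
      = β^2/16 *
        ((∫ q, Gfun β Vcos (2*K) q ∂(nuMeas β Vcos))^2
          + (∫ q, Gfun β Vcos (2*K-1) q ∂(nuMeas β Vcos))^2
          + (∫ q, Gfun β Vcos (2*K-2) q ∂(nuMeas β Vcos))^2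
          + (∫ q, Gfun β Vcos (2*K-3) q ∂(nuMeas β Vcos))^2) ∧
    (∫ q, (deriv (projq β Vcos K (fun _ => 1)) q)^2 ∂(nuMeas β Vcos))
      ≤ β^2/16 *
        ∫ q, (1 - projq β Vcos (K-1) (fun _ => 1) q)^2 ∂(nuMeas β Vcos) := by
  obtain ⟨m, rfl⟩ : ∃ m, K = m + 2 := ⟨K - 2, by omega⟩
  have hπ := Real.pi_pos
  have hZ := Znu_pos β
  constructor
  · rw [lhs_eq β m,
      show 2*(m+2) - 1 = 2*(m+1)+1 from by omega,
      show 2*(m+2) - 2 = 2*(m+1) from by omega,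
      show 2*(m+2) - 3 = 2*m+1 from by omega,
      coef_even' β (m+2) (by omega),
      coef_odd' β (2*(m+1)+1) (by omega),
      coef_even' β (m+1) (by omega),
      coef_odd' β (2*m+1) (by omega)]
    have hsq : Real.sqrt (Znu β Vcos/π) * Real.sqrt (Znu β Vcos/π) = Znu β Vcos/π :=
      Real.mul_self_sqrt (by positivity)
    have key : ∀ g : ℝ, ((Znu β Vcos)⁻¹ * (Real.sqrt (Znu β Vcos/π) * g))^2
        = g^2/(π * Znu β Vcos) := by
      intro g
      rw [show ((Znu β Vcos)⁻¹ * (Real.sqrt (Znu β Vcos/π) * g))^2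
          = (Real.sqrt (Znu β Vcos/π) * Real.sqrt (Znu β Vcos/π))
            * (g^2 * ((Znu β Vcos)⁻¹)^2) from by ring, hsq]
      field_simp
    rw [key, key]
    rw [show (0:ℝ)^2 = 0 from by norm_num]
    field_simp
    ring
  · rw [lhs_eq β m, show (m+2)-1 = m+1 from by omega]
    exact mul_le_mul_of_nonneg_left (bessel β m) (by positivity)
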